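/- arXiv:2602.06779 — 2 statements merged into one kernel-verified Lean document; each statement's English description precedes it below -/
import Mathlib

section
/- Let L⁰φ = φ'' + c(z)φ where c(z) = f_u(w⁰(z),v*) with c(z) → f_u(h^∓(v*), v*) < 0 exponentially as z → ±∞, and let w⁰_z ∈ Ker L⁰ be negative with exponential decay. For g in the Banach space X with ∫_ℝ g w⁰_z dz = 0, the function φ(z) = α w⁰_z(z) + w⁰_z(z)∫₀^z (w⁰_z(ξ))^{−2} ∫_{±∞}^{ξ} w⁰_z(η) g(η) dη dξ (variation of constants) solves L⁰φ = g, and its limits at ±∞ are φ_{±∞} = g_{±∞}/f_u(h^∓(v*), v*). -/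
/-!
Write `φ = α w + w I` with `I' = w⁻² J` and `J' = w g`. Differentiating twice, everything
cancels except `(α + I) (w'' + c w) + g = g`.

For the limit at `+∞` (the one at `-∞` follows by the reflection `z ↦ -z`), write
`w I = -I / (-1/w)` with `-1/w → +∞`. By the `∞/∞` form of L'Hôpital's rule its limit is that
of `I' / (-1/w)' = J / w'`. The orthogonality condition makes `J → 0` at `+∞`, so the `0/0` form
reduces this to `w g / w'' = g / (-c) → -g₊/c₊`. The `∞/∞` rule needs `w' > 0` near `+∞`,
which holds because `w'' = -c w < 0` there and `w' → 0`.
-/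

open MeasureTheory Real Filter Set Topology Asymptotics

theorem isLittleO_atTop_of_hasDerivAt {f g f' g' : ℝ → ℝ}
    (hf : ∀ᶠ x in atTop, HasDerivAt f (f' x) x) (hg : ∀ᶠ x in atTop, HasDerivAt g (g' x) x)
    (hg' : ∀ᶠ x in atTop, 0 ≤ g' x) (hgtop : Tendsto g atTop atTop) (h : f' =o[atTop] g') :
    f =o[atTop] g := by
  refine IsLittleO.of_bound fun ε hε => ?_
  have hε2 : 0 < ε / 2 := half_pos hε
  obtain ⟨A, hA⟩ := eventually_atTop.1 (hf.and (hg.and (hg'.and (h.bound hε2))))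
  have hmvt : ∀ x, A ≤ x → |f x - f A| ≤ ε / 2 * (g x - g A) := fun x hAx =>
    image_norm_le_of_norm_deriv_right_le_deriv_boundary' (a := A) (b := x)
      (f := fun y => f y - f A) (B := fun y => ε / 2 * (g y - g A))
      (fun y hy => ((hA y hy.1).1.continuousAt.sub continuousAt_const).continuousWithinAt)
      (fun y hy => ((hA y hy.1).1.sub_const (f A)).hasDerivWithinAt)
      (by simp)
      (fun y hy => (((hA y hy.1).2.1.sub_const (g A)).continuousAt.const_mul _).continuousWithinAt)
      (fun y hy => (((hA y hy.1).2.1.sub_const (g A)).const_mul (ε / 2)).hasDerivWithinAt)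
      (fun y hy => by
        simpa [abs_of_nonneg (hA y hy.1).2.2.1] using (hA y hy.1).2.2.2)
      ⟨hAx, le_rfl⟩
  filter_upwards [eventually_ge_atTop A, hgtop.eventually_ge_atTop 0,
    hgtop.eventually_ge_atTop ((|f A| + ε / 2 * |g A|) / (ε / 2))] with x hAx hgx hgbig
  rw [Real.norm_eq_abs, Real.norm_eq_abs, abs_of_nonneg hgx]
  calc |f x| ≤ |f x - f A| + |f A| := by linarith [abs_sub_abs_le_abs_sub (f x) (f A)]
    _ ≤ ε / 2 * (g x - g A) + |f A| := by linarith [hmvt x hAx]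
    _ ≤ ε / 2 * g x + (|f A| + ε / 2 * |g A|) := by nlinarith [neg_abs_le (g A)]
    _ ≤ ε * g x := by linarith [(div_le_iff₀ hε2).1 hgbig]

theorem lhopital_atTop_of_tendsto_atTop {f g f' g' : ℝ → ℝ} {L : ℝ}
    (hf : ∀ᶠ x in atTop, HasDerivAt f (f' x) x) (hg : ∀ᶠ x in atTop, HasDerivAt g (g' x) x)
    (hg' : ∀ᶠ x in atTop, 0 < g' x) (hgtop : Tendsto g atTop atTop)
    (hdiv : Tendsto (fun x => f' x / g' x) atTop (𝓝 L)) :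
    Tendsto (fun x => f x / g x) atTop (𝓝 L) := by
  have hderiv : (fun x => f' x - L * g' x) =o[atTop] g' := by
    rw [isLittleO_iff_tendsto' (hg'.mono fun x hx h => absurd h hx.ne')]
    refine (tendsto_sub_nhds_zero_iff.2 hdiv).congr' ?_
    filter_upwards [hg'] with x hx
    field_simp
  have hlittle := isLittleO_atTop_of_hasDerivAt (f := fun x => f x - L * g x)
    (hf.and hg |>.mono fun x hx => hx.1.sub (hx.2.const_mul L)) hg (hg'.mono fun x hx => hx.le)
    hgtop hderiv
  rw [isLittleO_iff_tendsto' ((hgtop.eventually_gt_atTop 0).mono fun x hx h => absurd h hx.ne')]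
    at hlittle
  refine tendsto_sub_nhds_zero_iff.1 (hlittle.congr' ?_)
  filter_upwards [hgtop.eventually_gt_atTop 0] with x hx
  field_simp

theorem eventually_pos_of_deriv_neg_of_tendsto_zero {f f' : ℝ → ℝ}
    (hf : ∀ᶠ x in atTop, HasDerivAt f (f' x) x) (hf' : ∀ᶠ x in atTop, f' x < 0)
    (hlim : Tendsto f atTop (𝓝 0)) : ∀ᶠ x in atTop, 0 < f x := by
  obtain ⟨A, hA⟩ := eventually_atTop.1 (hf.and hf')
  have hanti : StrictAntiOn f (Ici A) :=
    strictAntiOn_of_hasDerivWithinAt_neg (convex_Ici A)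
      (fun x hx => (hA x hx).1.continuousAt.continuousWithinAt)
      (fun x hx => (hA x (interior_subset hx)).1.hasDerivWithinAt)
      (fun x hx => (hA x (interior_subset hx)).2)
  filter_upwards [eventually_ge_atTop A] with x hx
  have hnext : 0 ≤ f (x + 1) := le_of_tendsto hlim <| eventually_atTop.2
    ⟨x + 1, fun y hy => hanti.antitoneOn (mem_Ici.2 (by linarith)) (mem_Ici.2 (by linarith)) hy⟩
  exact hnext.trans_lt (hanti hx (mem_Ici.2 (by linarith)) (by linarith))

theorem integrable_exp_neg_mul_abs {d : ℝ} (hd : 0 < d) :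
    Integrable fun x : ℝ => exp (-d * |x|) := by
  refine Integrable.of_integral_ne_zero ?_
  rw [integral_comp_abs (f := fun x => exp (-d * x)), integral_exp_mul_Ioi (neg_lt_zero.2 hd)]
  simp [hd.ne']

section IntegralIic

variable {E : Type*} [NormedAddCommGroup E] [NormedSpace ℝ E] {f : ℝ → E}

theorem hasDerivAt_setIntegral_Iic [CompleteSpace E] (hf : Integrable f) (hfc : Continuous f)
    (x : ℝ) : HasDerivAt (fun x => ∫ t in Iic x, f t) (f x) x := by
  have hsplit : (fun x => ∫ t in Iic x, f t) =
      fun x => (∫ t in Iic 0, f t) + ∫ t in (0 : ℝ)..x, f t :=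
    funext fun x => by
      rw [← intervalIntegral.integral_Iic_sub_Iic hf.integrableOn hf.integrableOn]
      abel
  rw [hsplit]
  exact (hfc.integral_hasStrictDerivAt 0 x).hasDerivAt.const_add _

theorem tendsto_setIntegral_Iic_atTop (hf : Integrable f) :
    Tendsto (fun x => ∫ t in Iic x, f t) atTop (𝓝 (∫ t, f t)) :=
  (aecover_Iic tendsto_id).integral_tendsto_of_countably_generated hf

theorem tendsto_setIntegral_Iic_atBot (hf : Integrable f) :
    Tendsto (fun x => ∫ t in Iic x, f t) atBot (𝓝 0) := by
  have hIoi : Tendsto (fun x => ∫ t in Ioi x, f t) atBot (𝓝 (∫ t, f t)) :=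
    (aecover_Ioi tendsto_id).integral_tendsto_of_countably_generated hf
  simpa using (tendsto_const_nhds (x := ∫ t, f t)).sub hIoi |>.congr fun x => by
    rw [← intervalIntegral.integral_Iic_add_Ioi hf.integrableOn hf.integrableOn,
      add_sub_cancel_right]

end IntegralIic

theorem tendsto_of_abs_sub_le_exp {f : ℝ → ℝ} {l : Filter ℝ} (hl : Tendsto (|·|) l atTop)
    {a C d : ℝ} (hd : 0 < d) (h : ∀ᶠ z in l, |f z - a| ≤ C * exp (-d * |z|)) :
    Tendsto f l (𝓝 a) := by
  have hexp : Tendsto (fun z => C * exp (-d * |z|)) l (𝓝 0) := by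
    simpa [neg_mul] using
      (tendsto_exp_neg_atTop_nhds_zero.comp (hl.const_mul_atTop hd)).const_mul C
  exact tendsto_sub_nhds_zero_iff.1 (squeeze_zero_norm' h hexp)

/-- Membership of `f` in the space `X` of the paper, with limit `a` at `+∞` and `b` at `-∞`. -/
def HasExpLimits (f : ℝ → ℝ) (a b : ℝ) : Prop :=
  ∃ C d : ℝ, 0 < d ∧ ∀ z : ℝ, |f z - (if 0 ≤ z then a else b)| ≤ C * exp (-d * |z|)

namespace HasExpLimits

variable {f : ℝ → ℝ} {a b : ℝ}

theorem of_abs_le {C d : ℝ} (hd : 0 < d) (h : ∀ z, |f z| ≤ C * exp (-d * |z|)) :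
    HasExpLimits f 0 0 :=
  ⟨C, d, hd, by simpa using h⟩

theorem tendsto_atTop (hf : HasExpLimits f a b) : Tendsto f atTop (𝓝 a) := by
  obtain ⟨C, d, hd, h⟩ := hf
  exact tendsto_of_abs_sub_le_exp tendsto_abs_atTop_atTop hd <|
    (eventually_ge_atTop 0).mono fun z hz => by simpa [hz] using h z

theorem tendsto_atBot (hf : HasExpLimits f a b) : Tendsto f atBot (𝓝 b) := by
  obtain ⟨C, d, hd, h⟩ := hf
  exact tendsto_of_abs_sub_le_exp tendsto_abs_atBot_atTop hd <|
    (eventually_lt_atBot 0).mono fun z hz => by simpa [hz.not_ge] using h z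

theorem exists_abs_le (hf : HasExpLimits f a b) : ∃ M, ∀ z, |f z| ≤ M := by
  obtain ⟨C, d, hd, h⟩ := hf
  refine ⟨|C| + max |a| |b|, fun z => ?_⟩
  have hexp : exp (-d * |z|) ≤ 1 := exp_le_one_iff.2 <|
    mul_nonpos_of_nonpos_of_nonneg (neg_nonpos.2 hd.le) (abs_nonneg z)
  have hL : |if 0 ≤ z then a else b| ≤ max |a| |b| := by
    split_ifs
    exacts [le_max_left _ _, le_max_right _ _]
  set L := if 0 ≤ z then a else b
  calc |f z| ≤ |f z - L| + |L| := by linarith [abs_sub_abs_le_abs_sub (f z) L]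
    _ ≤ |C| * exp (-d * |z|) + |L| := by
      gcongr
      exact (h z).trans (mul_le_mul_of_nonneg_right (le_abs_self C) (exp_pos _).le)
    _ ≤ |C| + max |a| |b| := add_le_add (mul_le_of_le_one_right (abs_nonneg C) hexp) hL

theorem integrable (hf : HasExpLimits f 0 0) (hfc : Continuous f) : Integrable f := by
  obtain ⟨C, d, hd, h⟩ := hf
  exact ((integrable_exp_neg_mul_abs hd).const_mul C).mono' hfc.aestronglyMeasurable
    (ae_of_all _ fun z => by simpa using h z)

end HasExpLimits

/-- Here `J` stands for `z ↦ ∫_{-∞}^z w g`. -/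
noncomputable def variationOfConstants (w J : ℝ → ℝ) (z : ℝ) : ℝ :=
  w z * ∫ ξ in (0 : ℝ)..z, (w ξ ^ 2)⁻¹ * J ξ

section VariationOfConstants

variable {c w w' w'' g J : ℝ → ℝ}

theorem hasDerivAt_integral_inv_sq_mul (hw : ∀ z, w z ≠ 0) (hwc : Continuous w)
    (hJ : Continuous J) (z : ℝ) :
    HasDerivAt (fun z => ∫ ξ in (0 : ℝ)..z, (w ξ ^ 2)⁻¹ * J ξ) ((w z ^ 2)⁻¹ * J z) z :=
  ((((hwc.pow 2).inv₀ fun z => pow_ne_zero 2 (hw z)).mul hJ).integral_hasStrictDerivAt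
    0 z).hasDerivAt

theorem variationOfConstants_solves (α : ℝ) (hw : ∀ z, w z ≠ 0)
    (hw' : ∀ z, HasDerivAt w (w' z) z) (hw'' : ∀ z, HasDerivAt w' (w'' z) z)
    (hker : ∀ z, w'' z + c z * w z = 0) (hJ : ∀ z, HasDerivAt J (w z * g z) z) (z : ℝ) :
    deriv (deriv fun z => α * w z + variationOfConstants w J z) z +
      c z * (α * w z + variationOfConstants w J z) = g z := by
  set I := fun z => ∫ ξ in (0 : ℝ)..z, (w ξ ^ 2)⁻¹ * J ξ
  have hI : ∀ z, HasDerivAt I ((w z ^ 2)⁻¹ * J z) z :=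
    hasDerivAt_integral_inv_sq_mul hw (continuous_iff_continuousAt.2 fun z => (hw' z).continuousAt)
      (continuous_iff_continuousAt.2 fun z => (hJ z).continuousAt)
  have hφ' : ∀ z, HasDerivAt (fun z => α * w z + variationOfConstants w J z)
      (α * w' z + (w' z * I z + J z / w z)) z := fun z =>
    ((hw' z).const_mul α).add <| ((hw' z).mul (hI z)).congr_deriv (by field_simp [hw z])
  have hφ'' : HasDerivAt (fun z => α * w' z + (w' z * I z + J z / w z))
      ((α + I z) * w'' z + g z) z :=
    (((hw'' z).const_mul α).add (((hw'' z).mul (hI z)).add ((hJ z).div (hw' z) (hw z))))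
      |>.congr_deriv (by field_simp [hw z]; ring)
  have hφ : variationOfConstants w J z = w z * I z := rfl
  rw [funext fun z => (hφ' z).deriv, hφ''.deriv, hφ]
  linear_combination (α + I z) * hker z

theorem tendsto_variationOfConstants_atTop {cp gp : ℝ} (hcp : cp < 0)
    (hc : Tendsto c atTop (𝓝 cp)) (hw : ∀ z, w z < 0) (hw' : ∀ z, HasDerivAt w (w' z) z)
    (hw'' : ∀ z, HasDerivAt w' (w'' z) z) (hker : ∀ z, w'' z + c z * w z = 0)
    (hw0 : Tendsto w atTop (𝓝 0)) (hw'0 : Tendsto w' atTop (𝓝 0))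
    (hg : Tendsto g atTop (𝓝 gp)) (hJ : ∀ z, HasDerivAt J (w z * g z) z)
    (hJ0 : Tendsto J atTop (𝓝 0)) :
    Tendsto (variationOfConstants w J) atTop (𝓝 (gp / cp)) := by
  have hw0' : ∀ z, w z ≠ 0 := fun z => (hw z).ne
  have hcneg : ∀ᶠ z in atTop, c z < 0 := hc.eventually_lt_const hcp
  have hw''neg : ∀ᶠ z in atTop, w'' z < 0 :=
    hcneg.mono fun z hz => by linarith [hker z, mul_pos_of_neg_of_neg hz (hw z)]
  have hw'pos : ∀ᶠ z in atTop, 0 < w' z :=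
    eventually_pos_of_deriv_neg_of_tendsto_zero (.of_forall hw'') hw''neg hw'0
  have hJw' : Tendsto (fun z => J z / w' z) atTop (𝓝 (gp / -cp)) := by
    refine HasDerivAt.lhopital_zero_atTop (.of_forall hJ) (.of_forall hw'')
      (hw''neg.mono fun z hz => hz.ne) hJ0 hw'0 ((hg.div hc.neg (neg_ne_zero.2 hcp.ne)).congr' ?_)
    filter_upwards [hcneg] with z hz
    rw [Pi.div_apply, show w'' z = -(c z * w z) by linarith [hker z]]
    field_simp [hw0' z, hz.ne]
  have hinv : Tendsto (fun z => -(w z)⁻¹) atTop atTop :=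
    tendsto_neg_atBot_atTop.comp
      (tendsto_nhdsWithin_iff.2 ⟨hw0, .of_forall hw⟩).inv_tendsto_nhdsLT_zero
  have hI := lhopital_atTop_of_tendsto_atTop (g := fun z => -(w z)⁻¹)
    (.of_forall (hasDerivAt_integral_inv_sq_mul hw0'
      (continuous_iff_continuousAt.2 fun z => (hw' z).continuousAt)
      (continuous_iff_continuousAt.2 fun z => (hJ z).continuousAt)))
    (.of_forall fun z => ((hw' z).inv (hw0' z)).neg)
    (hw'pos.mono fun z hz => by simpa [neg_div] using div_pos hz (pow_two_pos_of_ne_zero (hw0' z)))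
    hinv (hJw'.congr' (.of_forall fun z => by field_simp [hw0' z]))
  have hlim : Tendsto (fun z => (∫ ξ in (0 : ℝ)..z, (w ξ ^ 2)⁻¹ * J ξ) / (w z)⁻¹) atTop
      (𝓝 (gp / cp)) := by simpa only [div_neg, neg_neg] using hI.neg
  refine hlim.congr fun z => ?_
  rw [variationOfConstants, div_inv_eq_mul, mul_comm]

theorem variationOfConstants_comp_neg (w J : ℝ → ℝ) (z : ℝ) :
    variationOfConstants (fun z => w (-z)) (fun z => -J (-z)) z =
      variationOfConstants w J (-z) := by
  simp only [variationOfConstants, mul_neg, intervalIntegral.integral_neg,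
    intervalIntegral.integral_comp_neg fun ξ => (w ξ ^ 2)⁻¹ * J ξ, neg_zero,
    intervalIntegral.integral_symm (-z) 0]

theorem tendsto_variationOfConstants_atBot {cm gm : ℝ} (hcm : cm < 0)
    (hc : Tendsto c atBot (𝓝 cm)) (hw : ∀ z, w z < 0) (hw' : ∀ z, HasDerivAt w (w' z) z)
    (hw'' : ∀ z, HasDerivAt w' (w'' z) z) (hker : ∀ z, w'' z + c z * w z = 0)
    (hw0 : Tendsto w atBot (𝓝 0)) (hw'0 : Tendsto w' atBot (𝓝 0))
    (hg : Tendsto g atBot (𝓝 gm)) (hJ : ∀ z, HasDerivAt J (w z * g z) z)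
    (hJ0 : Tendsto J atBot (𝓝 0)) :
    Tendsto (variationOfConstants w J) atBot (𝓝 (gm / cm)) := by
  have reflect {f f' : ℝ → ℝ} (hf : ∀ z, HasDerivAt f (f' z) z) (z : ℝ) :
      HasDerivAt (fun z => f (-z)) (-f' (-z)) z := by
    simpa [Function.comp_def] using (hf (-z)).comp z (hasDerivAt_neg z)
  have hneg := tendsto_neg_atTop_atBot (G := ℝ)
  have h := tendsto_variationOfConstants_atTop (w := fun z => w (-z)) (w' := fun z => -w' (-z))
    (w'' := fun z => w'' (-z)) (J := fun z => -J (-z))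
    hcm (hc.comp hneg) (fun z => hw (-z)) (reflect hw')
    (fun z => by simpa [Pi.neg_def] using (reflect hw'' z).neg) (fun z => hker (-z)) (hw0.comp hneg)
    (by simpa using (hw'0.comp hneg).neg) (hg.comp hneg)
    (fun z => by simpa [Pi.neg_def] using (reflect hJ z).neg) (by simpa using (hJ0.comp hneg).neg)
  simp only [funext (variationOfConstants_comp_neg w J)] at h
  simpa [Function.comp_def] using h.comp tendsto_neg_atBot_atTop

end VariationOfConstants

theorem variation_of_constants_solution_general
    (c : ℝ → ℝ)
    (cp cm : ℝ) (hcp : cp < 0) (hcm : cm < 0)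
    (hclim : ∃ C d : ℝ, 0 < d ∧ ∀ z : ℝ,
      |c z - (if 0 ≤ z then cp else cm)| ≤ C * Real.exp (-d * |z|))
    (w0z : ℝ → ℝ) (hw0z : ContDiff ℝ 2 w0z) (hneg : ∀ z : ℝ, w0z z < 0)
    (hker : ∀ z : ℝ, deriv (deriv w0z) z + c z * w0z z = 0)
    (hdecay : ∃ C d : ℝ, 0 < d ∧ ∀ z : ℝ,
      |w0z z| + |deriv w0z z| + |deriv (deriv w0z) z| ≤ C * Real.exp (-d * |z|))
    (g : ℝ → ℝ) (hg : Continuous g) (gp gm : ℝ)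
    (hgX : ∃ C d : ℝ, 0 < d ∧ ∀ z : ℝ,
      |g z - (if 0 ≤ z then gp else gm)| ≤ C * Real.exp (-d * |z|))
    (horth : ∫ z : ℝ, g z * w0z z = 0)
    (α : ℝ) (φ : ℝ → ℝ)
    (hφdef : ∀ z : ℝ, φ z = α * w0z z +
      w0z z * ∫ ξ in (0 : ℝ)..z, (w0z ξ ^ 2)⁻¹ * ∫ η in Set.Iic ξ, w0z η * g η) :
    (∀ z : ℝ, deriv (deriv φ) z + c z * φ z = g z) ∧
    Filter.Tendsto φ Filter.atTop (nhds (gp / cp)) ∧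
    Filter.Tendsto φ Filter.atBot (nhds (gm / cm)) := by
  have hc : HasExpLimits c cp cm := hclim
  have hgl : HasExpLimits g gp gm := hgX
  obtain ⟨C, d, hd, hdecay⟩ := hdecay
  have hw : HasExpLimits w0z 0 0 := .of_abs_le (C := C) hd fun z => by
    linarith [hdecay z, abs_nonneg (deriv w0z z), abs_nonneg (deriv (deriv w0z) z)]
  have hw' : HasExpLimits (deriv w0z) 0 0 := .of_abs_le (C := C) hd fun z => by
    linarith [hdecay z, abs_nonneg (w0z z), abs_nonneg (deriv (deriv w0z) z)]
  have hw1 : ∀ z, HasDerivAt w0z (deriv w0z z) z := fun z =>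
    (hw0z.differentiable two_ne_zero z).hasDerivAt
  have hw2 : ∀ z, HasDerivAt (deriv w0z) (deriv (deriv w0z) z) z := fun z =>
    ((hw0z.deriv' (n := 1)).differentiable one_ne_zero z).hasDerivAt
  obtain ⟨M, hM⟩ := hgl.exists_abs_le
  have hint : Integrable fun z => w0z z * g z :=
    (hw.integrable hw0z.continuous).mul_bdd hg.aestronglyMeasurable (ae_of_all _ hM)
  set J := fun ξ => ∫ η in Iic ξ, w0z η * g η
  have hJ : ∀ z, HasDerivAt J (w0z z * g z) z :=
    hasDerivAt_setIntegral_Iic hint (hw0z.continuous.mul hg)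
  have hJtop : Tendsto J atTop (𝓝 0) := by
    convert tendsto_setIntegral_Iic_atTop hint using 2
    simp_rw [← horth, mul_comm]
  obtain rfl : φ = fun z => α * w0z z + variationOfConstants w0z J z := funext hφdef
  refine ⟨variationOfConstants_solves α (fun z => (hneg z).ne) hw1 hw2 hker hJ, ?_, ?_⟩
  · simpa using (hw.tendsto_atTop.const_mul α).add <| tendsto_variationOfConstants_atTop hcp
      hc.tendsto_atTop hneg hw1 hw2 hker hw.tendsto_atTop hw'.tendsto_atTop hgl.tendsto_atTop hJ
      hJtop
  · simpa using (hw.tendsto_atBot.const_mul α).add <| tendsto_variationOfConstants_atBot hcm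
      hc.tendsto_atBot hneg hw1 hw2 hker hw.tendsto_atBot hw'.tendsto_atBot hgl.tendsto_atBot hJ
      (tendsto_setIntegral_Iic_atBot hint)

/-- the variation-of-constants formula solves `L⁰φ = g` for `g ∈ X`
orthogonal to the kernel element `w⁰_z`, and the solution has limits
`φ_{±∞} = g_{±∞}/f_u(h^∓(v*), v*)` at `±∞`.  Here the potential
`c(z) = f_u(w⁰(z), v*)` tends exponentially to the negative limits
`cp = f_u(h⁻(v*),v*)` at `+∞` and `cm = f_u(h⁺(v*),v*)` at `−∞`. -/
theorem variation_of_constants_solution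
    (c : ℝ → ℝ) (hc : Continuous c)
    (cp cm : ℝ) (hcp : cp < 0) (hcm : cm < 0)
    (hclim : ∃ C d : ℝ, 0 < d ∧ ∀ z : ℝ,
      |c z - (if 0 ≤ z then cp else cm)| ≤ C * Real.exp (-d * |z|))
    (w0z : ℝ → ℝ) (hw0z : ContDiff ℝ 2 w0z) (hneg : ∀ z : ℝ, w0z z < 0)
    (hker : ∀ z : ℝ, deriv (deriv w0z) z + c z * w0z z = 0)
    (hdecay : ∃ C d : ℝ, 0 < d ∧ ∀ z : ℝ,
      |w0z z| + |deriv w0z z| + |deriv (deriv w0z) z| ≤ C * Real.exp (-d * |z|))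
    (g : ℝ → ℝ) (hg : Continuous g) (gp gm : ℝ)
    (hgX : ∃ C d : ℝ, 0 < d ∧ ∀ z : ℝ,
      |g z - (if 0 ≤ z then gp else gm)| ≤ C * Real.exp (-d * |z|))
    (horth : ∫ z : ℝ, g z * w0z z = 0)
    (α : ℝ) (φ : ℝ → ℝ)
    (hφdef : ∀ z : ℝ, φ z = α * w0z z +
      w0z z * ∫ ξ in (0 : ℝ)..z, (w0z ξ ^ 2)⁻¹ * ∫ η in Set.Iic ξ, w0z η * g η) :
    (∀ z : ℝ, deriv (deriv φ) z + c z * φ z = g z) ∧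
    Filter.Tendsto φ Filter.atTop (nhds (gp / cp)) ∧
    Filter.Tendsto φ Filter.atBot (nhds (gm / cm)) :=
  variation_of_constants_solution_general c cp cm hcp hcm hclim w0z hw0z hneg hker hdecay g hg gp gm
    hgX horth α φ hφdef
end

section
/- Barrier estimate on a ball (Lemma 3.7): suppose ρ ∈ C²(B̄_R) satisfies ε²Δρ − c^ε(x)ρ = 0 in B_R ⊂ ℝ^N with c^ε ≥ c₀ > 0. Then for every ε₀ > 0 there exists σ₂ > 0 depending only on ε₀, R^{-1}, c₀, N such that |ρ(x)| ≤ 2‖ρ‖_{L^∞(B_R)} e^{−σ₂(R−|x|)/ε} for all x ∈ B_R and ε ∈ (0, ε₀]. -/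
open MeasureTheory Real

/-- The Laplacian of a scalar function on Euclidean space, as the sum of
second directional derivatives along the coordinate directions. -/
noncomputable def lapl {N : ℕ} (g : EuclideanSpace ℝ (Fin N) → ℝ)
    (x : EuclideanSpace ℝ (Fin N)) : ℝ :=
  ∑ i : Fin N, iteratedFDeriv ℝ 2 g x ![EuclideanSpace.single i 1, EuclideanSpace.single i 1]

/-!
Instead of the paper's `cosh` barrier we use the Gaussian `b z = exp (a (‖z‖² - R²))` with
`a = σ / (R ε)`, whose Laplacian is explicit: `ε² Δb = ε² (4a²‖z‖² + 2aN) b`, which is at most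
`c₀ b ≤ c^ε b` on `B_R` for all `ε ≤ ε₀` once `σ` is small. Since `b = 1` on the sphere and
`|ρ| ≤ M` there by continuity, the weak maximum principle applied to `±ρ - M b` gives
`|ρ| ≤ M b`, and `b x ≤ exp (-σ (R - ‖x‖) / ε)` because `(R + ‖x‖) / R ≥ 1`.
-/

open Filter Topology Metric InnerProductSpace Laplacian

theorem lapl_eq_laplacian {N : ℕ} (g : EuclideanSpace ℝ (Fin N) → ℝ) : lapl g = Δ g := by
  ext x
  simp [lapl, laplacian_eq_iteratedFDeriv_orthonormalBasis g (EuclideanSpace.basisFun (Fin N) ℝ)]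

theorem IsLocalMax.deriv_deriv_nonpos {φ : ℝ → ℝ} {t₀ : ℝ} (hmax : IsLocalMax φ t₀)
    (hφ : ContinuousAt φ t₀) : deriv (deriv φ) t₀ ≤ 0 := by
  by_contra! hpos
  -- `φ'` vanishes at `t₀` and increases through it, so `φ` increases strictly to the right.
  have hsign := eventually_nhdsWithin_sign_eq_of_deriv_pos hpos hmax.deriv_eq_zero
  obtain ⟨c, hc, hsub⟩ := mem_nhdsGT_iff_exists_Ioo_subset.mp
    ((deriv_pos_right_of_sign_deriv (nhdsWithin_le_nhds hsign)).and (nhdsWithin_le_nhds hmax))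
  have hm : (t₀ + c) / 2 ∈ Set.Ioo t₀ c := ⟨by linarith [hc.out], by linarith [hc.out]⟩
  have hmono : StrictMonoOn φ (Set.Icc t₀ ((t₀ + c) / 2)) := by
    refine strictMonoOn_of_deriv_pos (convex_Icc _ _) (fun t ht => ?_) fun t ht => ?_
    · rcases ht.1.eq_or_lt with rfl | ht₀
      · exact hφ.continuousWithinAt
      · exact (differentiableAt_of_deriv_ne_zero
          (hsub ⟨ht₀, ht.2.trans_lt hm.2⟩).1.ne').continuousAt.continuousWithinAt
    · rw [interior_Icc] at ht
      exact (hsub ⟨ht.1, ht.2.trans hm.2⟩).1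
  exact (hmono (Set.left_mem_Icc.2 hm.1.le) (Set.right_mem_Icc.2 hm.1.le) hm.1).not_ge
    (hsub hm).2

theorem deriv_deriv_exp_quadratic (c p q : ℝ) :
    deriv (deriv fun t : ℝ => exp (c + p * t + q * t ^ 2)) 0 = exp c * (p ^ 2 + 2 * q) := by
  have hquad (t : ℝ) : HasDerivAt (fun t : ℝ => c + p * t + q * t ^ 2) (p + 2 * q * t) t := by
    refine (((hasDerivAt_id t).const_mul p).const_add c |>.fun_add
      ((hasDerivAt_pow 2 t).const_mul q)).congr_deriv ?_
    norm_num
    ring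
  have hderiv : deriv (fun t : ℝ => exp (c + p * t + q * t ^ 2)) =
      fun t => exp (c + p * t + q * t ^ 2) * (p + 2 * q * t) :=
    funext fun t => (hquad t).exp.deriv
  have hlin : HasDerivAt (fun t : ℝ => p + 2 * q * t) (2 * q) 0 := by
    simpa using ((hasDerivAt_id (0 : ℝ)).const_mul (2 * q)).const_add p
  rw [hderiv, ((hquad 0).exp.fun_mul hlin).deriv]
  simp only [mul_zero, add_zero, zero_pow two_ne_zero]
  ring

section NormedSpace

variable {E F : Type*} [NormedAddCommGroup E] [NormedSpace ℝ E] [NormedAddCommGroup F]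
  [NormedSpace ℝ F]

theorem ContDiffAt.deriv_deriv_comp_add_smul {f : E → F} {x : E} (hf : ContDiffAt ℝ 2 f x)
    (v : E) : deriv (deriv fun t : ℝ => f (x + t • v)) 0 = iteratedFDeriv ℝ 2 f x ![v, v] := by
  have hline (t : ℝ) : HasDerivAt (fun t : ℝ => x + t • v) v t := by
    simpa using ((hasDerivAt_id t).smul_const v).const_add x
  have hderiv : deriv (fun t : ℝ => f (x + t • v)) =ᶠ[𝓝 0]
      fun t => fderiv ℝ f (x + t • v) v := by
    have : Tendsto (fun t : ℝ => x + t • v) (𝓝 0) (𝓝 x) := by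
      simpa using (hline 0).continuousAt.tendsto
    filter_upwards [this.eventually (hf.eventually (by simp))] with t ht
    exact ((ht.differentiableAt (by simp)).hasFDerivAt.comp_hasDerivAt t (hline t)).deriv
  have hsecond : HasDerivAt (fun t : ℝ => fderiv ℝ f (x + t • v) v)
      (fderiv ℝ (fderiv ℝ f) x v v) 0 := by
    have hfderiv : HasFDerivAt (fderiv ℝ f) (fderiv ℝ (fderiv ℝ f) x) (x + (0 : ℝ) • v) := by
      simpa using ((hf.fderiv_right (m := 1) (by norm_num)).differentiableAt
        one_ne_zero).hasFDerivAt
    exact (ContinuousLinearMap.apply ℝ F v).hasFDerivAt.comp_hasDerivAt 0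
      (hfderiv.comp_hasDerivAt 0 (hline 0))
  rw [hderiv.deriv_eq, hsecond.deriv, iteratedFDeriv_two_apply]
  rfl

theorem IsLocalMax.iteratedFDeriv_two_nonpos {f : E → ℝ} {x : E} (hmax : IsLocalMax f x)
    (hf : ContDiffAt ℝ 2 f x) (v : E) : iteratedFDeriv ℝ 2 f x ![v, v] ≤ 0 := by
  have hline : ContinuousAt (fun t : ℝ => x + t • v) 0 := by fun_prop
  rw [← hf.deriv_deriv_comp_add_smul]
  exact IsLocalMax.deriv_deriv_nonpos (IsLocalMax.comp_continuous (by simpa using hmax) hline)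
    (ContinuousAt.comp (by simpa using hf.continuousAt) hline)

end NormedSpace

section InnerProductSpace

variable {E : Type*} [NormedAddCommGroup E] [InnerProductSpace ℝ E]

theorem contDiff_exp_mul_norm_sq_sub {n : WithTop ℕ∞} (a r : ℝ) :
    ContDiff ℝ n fun z : E => exp (a * (‖z‖ ^ 2 - r)) :=
  contDiff_exp.comp (contDiff_const.mul ((contDiff_norm_sq ℝ).sub contDiff_const))

variable [FiniteDimensional ℝ E]

theorem laplacian_exp_mul_norm_sq_sub (a r : ℝ) (y : E) :
    Δ (fun z : E => exp (a * (‖z‖ ^ 2 - r))) y =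
      exp (a * (‖y‖ ^ 2 - r)) * (4 * a ^ 2 * ‖y‖ ^ 2 + 2 * a * Module.finrank ℝ E) := by
  set e := stdOrthonormalBasis ℝ E
  have hdir (i) : iteratedFDeriv ℝ 2 (fun z : E => exp (a * (‖z‖ ^ 2 - r))) y ![e i, e i] =
      exp (a * (‖y‖ ^ 2 - r)) * ((2 * a * ⟪e i, y⟫_ℝ) ^ 2 + 2 * a) := by
    rw [← (contDiff_exp_mul_norm_sq_sub a r).contDiffAt.deriv_deriv_comp_add_smul]
    have hline : (fun t : ℝ => exp (a * (‖y + t • e i‖ ^ 2 - r))) =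
        fun t => exp (a * (‖y‖ ^ 2 - r) + 2 * a * ⟪e i, y⟫_ℝ * t + a * t ^ 2) := by
      ext t
      rw [norm_add_sq_real, norm_smul, e.orthonormal.1 i, real_inner_smul_right,
        real_inner_comm]
      simp only [norm_eq_abs, mul_one, sq_abs]
      ring_nf
    rw [hline, deriv_deriv_exp_quadratic]
  have hparseval : ∑ i, ⟪e i, y⟫_ℝ ^ 2 = ‖y‖ ^ 2 := by
    simpa [norm_eq_abs, sq_abs] using e.sum_sq_norm_inner_right y
  rw [laplacian_eq_iteratedFDeriv_orthonormalBasis _ e]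
  simp only [hdir, ← Finset.mul_sum, mul_pow, Finset.sum_add_distrib, hparseval,
    Finset.sum_const, Finset.card_univ, Fintype.card_fin, nsmul_eq_mul]
  ring

theorem IsLocalMax.laplacian_nonpos {f : E → ℝ} {x : E} (hmax : IsLocalMax f x)
    (hf : ContDiffAt ℝ 2 f x) : Δ f x ≤ 0 := by
  rw [laplacian_eq_iteratedFDeriv_stdOrthonormalBasis]
  exact Finset.sum_nonpos fun i _ => hmax.iteratedFDeriv_two_nonpos hf _

theorem IsCompact.nonpos_of_laplacian_pos {w : E → ℝ} {K : Set E} (hK : IsCompact K)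
    (hw : ContinuousOn w K) (hw₂ : ∀ y ∈ interior K, ContDiffAt ℝ 2 w y)
    (hΔ : ∀ y ∈ interior K, 0 < w y → 0 < Δ w y) (hfrontier : ∀ y ∈ frontier K, w y ≤ 0) :
    ∀ y ∈ K, w y ≤ 0 := by
  intro y hy
  obtain ⟨x₀, hx₀, hmax⟩ := hK.exists_isMaxOn ⟨y, hy⟩ hw
  refine (hmax hy).trans (not_lt.1 fun hpos => ?_)
  by_cases hint : x₀ ∈ interior K
  · have hloc : IsLocalMax w x₀ := hmax.isLocalMax (mem_interior_iff_mem_nhds.1 hint)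
    exact (hΔ x₀ hint hpos).not_ge (hloc.laplacian_nonpos (hw₂ x₀ hint))
  · exact (hfrontier x₀ ⟨subset_closure hx₀, hint⟩).not_gt hpos

theorem le_mul_of_laplacian_eq_mul {u b c : E → ℝ} {x₀ : E} {R ε M : ℝ} (hR : 0 < R)
    (hM₀ : 0 ≤ M) (hu : ContDiffOn ℝ 2 u (closedBall x₀ R)) (hb : ContDiff ℝ 2 b)
    (hc : ∀ y ∈ ball x₀ R, 0 < c y) (hu_eq : ∀ y ∈ ball x₀ R, ε ^ 2 * Δ u y = c y * u y)
    (hb_le : ∀ y ∈ ball x₀ R, ε ^ 2 * Δ b y ≤ c y * b y)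
    (hb_one : ∀ y ∈ sphere x₀ R, 1 ≤ b y) (hM : ∀ y ∈ ball x₀ R, u y ≤ M) :
    ∀ y ∈ closedBall x₀ R, u y ≤ M * b y := by
  have hu₂ (y) (hy : y ∈ ball x₀ R) : ContDiffAt ℝ 2 u y :=
    hu.contDiffAt (closedBall_mem_nhds_of_mem hy)
  have hMb (y) : ContDiffAt ℝ 2 (M • b) y := hb.contDiffAt.const_smul M
  have hw := (isCompact_closedBall x₀ R).nonpos_of_laplacian_pos (w := u - M • b)
    (hu.continuousOn.sub (hb.continuous.continuousOn.const_smul M))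
  rw [interior_closedBall x₀ hR.ne', frontier_closedBall x₀ hR.ne'] at hw
  refine fun y hy => sub_nonpos.1 (hw (fun y hy => (hu₂ y hy).sub (hMb y))
    (fun y hy hpos => ?_) (fun y hy => ?_) y hy)
  · -- `ε² Δ(u - M b) ≥ c u - M c b = c (u - M b) > 0`
    have hΔ : Δ (u - M • b) y = Δ u y - M * Δ b y := by
      rw [(hu₂ y hy).laplacian_sub (hMb y), laplacian_smul M hb.contDiffAt]
      rfl
    have hcw := mul_pos (hc y hy) hpos
    simp only [Pi.sub_apply, Pi.smul_apply, smul_eq_mul] at hcw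
    have : 0 < ε ^ 2 * Δ (u - M • b) y := by
      rw [hΔ, mul_sub, hu_eq y hy]
      nlinarith [mul_le_mul_of_nonneg_left (hb_le y hy) hM₀]
    exact pos_of_mul_pos_right this (sq_nonneg ε)
  · have hbdry : u y ≤ M := by
      refine ContinuousWithinAt.closure_le (s := ball x₀ R) ?_ ?_ continuousWithinAt_const hM
      · rw [closure_ball x₀ hR.ne']
        exact sphere_subset_closedBall hy
      · exact (hu.continuousOn y (sphere_subset_closedBall hy)).mono ball_subset_closedBall
    simp only [Pi.sub_apply, Pi.smul_apply, smul_eq_mul, sub_nonpos]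
    nlinarith [hb_one y hy]

theorem abs_le_mul_of_laplacian_eq_mul {u b c : E → ℝ} {x₀ : E} {R ε M : ℝ} (hR : 0 < R)
    (hu : ContDiffOn ℝ 2 u (closedBall x₀ R)) (hb : ContDiff ℝ 2 b)
    (hc : ∀ y ∈ ball x₀ R, 0 < c y) (hu_eq : ∀ y ∈ ball x₀ R, ε ^ 2 * Δ u y = c y * u y)
    (hb_le : ∀ y ∈ ball x₀ R, ε ^ 2 * Δ b y ≤ c y * b y)
    (hb_one : ∀ y ∈ sphere x₀ R, 1 ≤ b y) (hM : ∀ y ∈ ball x₀ R, |u y| ≤ M) :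
    ∀ y ∈ closedBall x₀ R, |u y| ≤ M * b y := by
  have hM₀ : 0 ≤ M := (abs_nonneg _).trans (hM x₀ (mem_ball_self hR))
  have hneg_eq (y) (hy : y ∈ ball x₀ R) : ε ^ 2 * Δ (-u) y = c y * (-u) y := by
    rw [laplacian_neg, Pi.neg_apply, Pi.neg_apply, mul_neg, hu_eq y hy, mul_neg]
  intro y hy
  refine abs_le'.2 ⟨?_, ?_⟩
  · exact le_mul_of_laplacian_eq_mul hR hM₀ hu hb hc hu_eq hb_le hb_one
      (fun y hy => (abs_le'.1 (hM y hy)).1) y hy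
  · exact le_mul_of_laplacian_eq_mul hR hM₀ hu.neg hb hc hneg_eq hb_le hb_one
      (fun y hy => (abs_le'.1 (hM y hy)).2) y hy

end InnerProductSpace

theorem exists_pos_barrier_rate {R c₀ ε₀ : ℝ} (hR : 0 < R) (hc₀ : 0 < c₀) (n : ℕ) :
    ∃ σ > 0, ∀ ε, 0 < ε → ε ≤ ε₀ → ∀ r, 0 ≤ r → r ≤ R →
      ε ^ 2 * (4 * (σ / (R * ε)) ^ 2 * r ^ 2 + 2 * (σ / (R * ε)) * n) ≤ c₀ := by
  have hsmall : Tendsto (fun σ : ℝ => 4 * σ ^ 2 + 2 * σ * ε₀ * n / R) (𝓝[>] 0) (𝓝 0) := by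
    refine tendsto_nhdsWithin_of_tendsto_nhds (Continuous.tendsto' ?_ 0 0 (by simp))
    fun_prop
  obtain ⟨σ, hσc, hσ : 0 < σ⟩ :=
    ((hsmall.eventually (gt_mem_nhds hc₀)).and self_mem_nhdsWithin).exists
  refine ⟨σ, hσ, fun ε hε hεε₀ r hr hrR => le_of_lt (lt_of_le_of_lt ?_ hσc)⟩
  have hrR' : (r / R) ^ 2 ≤ 1 := pow_le_one₀ (by positivity) ((div_le_one hR).2 hrR)
  calc ε ^ 2 * (4 * (σ / (R * ε)) ^ 2 * r ^ 2 + 2 * (σ / (R * ε)) * n)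
      = 4 * σ ^ 2 * (r / R) ^ 2 + 2 * σ * ε * n / R := by field_simp
    _ ≤ 4 * σ ^ 2 + 2 * σ * ε₀ * n / R :=
      add_le_add (mul_le_of_le_one_right (by positivity) hrR') (by gcongr)

theorem mul_sq_sub_sq_le_neg_mul_sub {σ R ε r : ℝ} (hσ : 0 ≤ σ) (hR : 0 < R) (hε : 0 < ε)
    (hr : 0 ≤ r) (hrR : r ≤ R) : σ / (R * ε) * (r ^ 2 - R ^ 2) ≤ -σ * (R - r) / ε := by
  rw [div_mul_eq_mul_div, div_le_div_iff₀ (mul_pos hR hε) hε]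
  nlinarith [mul_nonneg (mul_nonneg hσ hε.le) (mul_nonneg (sub_nonneg.2 hrR) hr)]

theorem barrier_estimate_on_ball_general
    {N : ℕ} (R : ℝ) (hR : 0 < R) (c₀ : ℝ) (hc₀ : 0 < c₀)
    (ε₀ : ℝ) :
    ∃ σ₂ : ℝ, 0 < σ₂ ∧
      ∀ ε : ℝ, 0 < ε → ε ≤ ε₀ →
      ∀ cε ρ : EuclideanSpace ℝ (Fin N) → ℝ,
        (∀ x ∈ Metric.closedBall (0 : EuclideanSpace ℝ (Fin N)) R, c₀ ≤ cε x) →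
        ContDiffOn ℝ 2 ρ (Metric.closedBall (0 : EuclideanSpace ℝ (Fin N)) R) →
        (∀ x ∈ Metric.ball (0 : EuclideanSpace ℝ (Fin N)) R,
          ε ^ 2 * lapl ρ x - cε x * ρ x = 0) →
        ∀ M : ℝ, (∀ y ∈ Metric.ball (0 : EuclideanSpace ℝ (Fin N)) R, |ρ y| ≤ M) →
        ∀ x ∈ Metric.ball (0 : EuclideanSpace ℝ (Fin N)) R,
          |ρ x| ≤ 2 * M * Real.exp (-σ₂ * (R - ‖x‖) / ε) := by
  obtain ⟨σ, hσ, hσc⟩ := exists_pos_barrier_rate (ε₀ := ε₀) hR hc₀ N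
  refine ⟨σ, hσ, fun ε hε hεε₀ cε ρ hc hρ hpde M hM x hx => ?_⟩
  have hc_ball (y) (hy : y ∈ ball (0 : EuclideanSpace ℝ (Fin N)) R) : c₀ ≤ cε y :=
    hc y (ball_subset_closedBall hy)
  set b : EuclideanSpace ℝ (Fin N) → ℝ := fun z => exp (σ / (R * ε) * (‖z‖ ^ 2 - R ^ 2))
  have hb_le (y) (hy : y ∈ ball 0 R) : ε ^ 2 * Δ b y ≤ cε y * b y := by
    rw [laplacian_exp_mul_norm_sq_sub, finrank_euclideanSpace_fin, mul_left_comm,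
      mul_comm (cε y)]
    exact mul_le_mul_of_nonneg_left ((hσc ε hε hεε₀ ‖y‖ (norm_nonneg y)
      (mem_ball_zero_iff.1 hy).le).trans (hc_ball y hy)) (exp_pos _).le
  have hρ_eq (y) (hy : y ∈ ball 0 R) : ε ^ 2 * Δ ρ y = cε y * ρ y := by
    rw [← lapl_eq_laplacian]
    linarith [hpde y hy]
  have hbound := abs_le_mul_of_laplacian_eq_mul hR hρ (contDiff_exp_mul_norm_sq_sub _ _)
    (fun y hy => hc₀.trans_le (hc_ball y hy)) hρ_eq hb_le
    (fun y hy => by simp [mem_sphere_zero_iff_norm.1 hy]) hM x (ball_subset_closedBall hx)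
  have hM₀ : 0 ≤ M := (abs_nonneg _).trans (hM x hx)
  calc |ρ x| ≤ M * b x := hbound
    _ ≤ M * exp (-σ * (R - ‖x‖) / ε) := mul_le_mul_of_nonneg_left (exp_le_exp.2
        (mul_sq_sub_sq_le_neg_mul_sub hσ.le hR hε (norm_nonneg x) (mem_ball_zero_iff.1 hx).le)) hM₀
    _ ≤ 2 * M * exp (-σ * (R - ‖x‖) / ε) := by
      nlinarith [mul_nonneg hM₀ (exp_pos (-σ * (R - ‖x‖) / ε)).le]

/-- Lemma 3.7: barrier estimate on a ball.  Solutions of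
`ε²Δρ − c^ε ρ = 0` in `B_R` with `c^ε ≥ c₀ > 0` satisfy
`|ρ(x)| ≤ 2‖ρ‖_{L^∞(B_R)} e^{−σ₂(R−|x|)/ε}`, with `σ₂` depending only on
`ε₀`, `R⁻¹`, `c₀` and `N`. -/
theorem barrier_estimate_on_ball
    {N : ℕ} (R : ℝ) (hR : 0 < R) (c₀ : ℝ) (hc₀ : 0 < c₀)
    (ε₀ : ℝ) (hε₀ : 0 < ε₀) :
    ∃ σ₂ : ℝ, 0 < σ₂ ∧
      ∀ ε : ℝ, 0 < ε → ε ≤ ε₀ →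
      ∀ cε ρ : EuclideanSpace ℝ (Fin N) → ℝ,
        (∀ x ∈ Metric.closedBall (0 : EuclideanSpace ℝ (Fin N)) R, c₀ ≤ cε x) →
        ContDiffOn ℝ 2 ρ (Metric.closedBall (0 : EuclideanSpace ℝ (Fin N)) R) →
        (∀ x ∈ Metric.ball (0 : EuclideanSpace ℝ (Fin N)) R,
          ε ^ 2 * lapl ρ x - cε x * ρ x = 0) →
        ∀ M : ℝ, (∀ y ∈ Metric.ball (0 : EuclideanSpace ℝ (Fin N)) R, |ρ y| ≤ M) →
        ∀ x ∈ Metric.ball (0 : EuclideanSpace ℝ (Fin N)) R,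
          |ρ x| ≤ 2 * M * Real.exp (-σ₂ * (R - ‖x‖) / ε) :=
  barrier_estimate_on_ball_general R hR c₀ hc₀ ε₀
end
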